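/- Let Φ ∈ ℝ^{M×N} have restricted isometry constant δ := δ_s < 1 of order s. Let x ∈ ℝ^N be supported on Λ, y = Φx, let Λ' ⊆ {1,…,N} with |Λ ∪ Λ'| ≤ s, and let x' be a least-squares estimate of y on Λ'. Then (Φᵀ(y − Φx'))_{Λ'} = 0 and ‖(Φᵀ(y − Φx'))_{Λ\Λ'}‖ = ‖(ΦᵀΦ(x − x'))_{Λ∪Λ'}‖ ≥ (1 − δ)·‖x − x'‖. -/

import Mathlib

open Finset

noncomputable section

/-- The Euclidean (ℓ₂) norm of a vector in `Fin n → ℝ`. -/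
def l2norm {n : ℕ} (v : Fin n → ℝ) : ℝ := Real.sqrt (∑ i, (v i) ^ 2)

/-- The sparsity `‖v‖₀` of a vector: the number of its nonzero entries. -/
def sparsity {n : ℕ} (v : Fin n → ℝ) : ℕ := (Finset.univ.filter fun i => v i ≠ 0).card

/-- The support of a vector, as a `Finset`. -/
def suppF {n : ℕ} (v : Fin n → ℝ) : Finset (Fin n) := Finset.univ.filter fun i => v i ≠ 0

/-- `restr v S` is the vector agreeing with `v` on `S` and zero outside `S`. -/
def restr {n : ℕ} (v : Fin n → ℝ) (S : Finset (Fin n)) : Fin n → ℝ :=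
  fun i => if i ∈ S then v i else 0

/-- `Φ` has restricted isometry constant `δ < 1` of order `s`:
`(1-δ)‖z‖² ≤ ‖Φz‖² ≤ (1+δ)‖z‖²` for every `s`-sparse `z`. -/
def HasRIC {M N : ℕ} (Φ : Matrix (Fin M) (Fin N) ℝ) (s : ℕ) (δ : ℝ) : Prop :=
  δ < 1 ∧ ∀ z : Fin N → ℝ, sparsity z ≤ s →
    (1 - δ) * (l2norm z) ^ 2 ≤ (l2norm (Φ.mulVec z)) ^ 2 ∧
      (l2norm (Φ.mulVec z)) ^ 2 ≤ (1 + δ) * (l2norm z) ^ 2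

/-- `Λ` is a top-`k` support of `v`: `|Λ| = k` and every entry of `v` inside `Λ`
dominates (in magnitude) every entry outside `Λ`. -/
def IsTopSupport {n : ℕ} (v : Fin n → ℝ) (k : ℕ) (Λ : Finset (Fin n)) : Prop :=
  Λ.card = k ∧ ∀ i ∈ Λ, ∀ j ∉ Λ, |v j| ≤ |v i|

/-- `x'` is a least-squares estimate of `y` on the support `Λ`. -/
def IsLSE {M N : ℕ} (Φ : Matrix (Fin M) (Fin N) ℝ) (y : Fin M → ℝ)
    (Λ : Finset (Fin N)) (x' : Fin N → ℝ) : Prop :=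
  suppF x' ⊆ Λ ∧ ∀ z : Fin N → ℝ, suppF z ⊆ Λ →
    l2norm (y - Φ.mulVec x') ≤ l2norm (y - Φ.mulVec z)

/-!
Minimality of `x'` over vectors supported on `Λ'` gives the normal equations: the residual
`y - Φx'` is orthogonal to `Φ e_i` for `i ∈ Λ'`, so `Φᵀ(y - Φx')` vanishes on `Λ'`, and it equals
`ΦᵀΦ(x - x')` because `y = Φx`. As `h = x - x'` is supported on `Λ ∪ Λ'`, the lower RIP bound and
Cauchy–Schwarz give `(1 - δ)‖h‖² ≤ ‖Φh‖² = ⟪h, (ΦᵀΦh)_{Λ∪Λ'}⟫ ≤ ‖h‖ ‖(ΦᵀΦh)_{Λ∪Λ'}‖`.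
-/

open Matrix

lemma l2norm_nonneg {n : ℕ} (v : Fin n → ℝ) : 0 ≤ l2norm v := Real.sqrt_nonneg _

lemma l2norm_sq {n : ℕ} (v : Fin n → ℝ) : l2norm v ^ 2 = v ⬝ᵥ v := by
  rw [l2norm, Real.sq_sqrt (Finset.sum_nonneg fun i _ => sq_nonneg (v i))]
  simp only [dotProduct, sq]

lemma l2norm_le_l2norm_iff {n : ℕ} {u v : Fin n → ℝ} :
    l2norm u ≤ l2norm v ↔ u ⬝ᵥ u ≤ v ⬝ᵥ v := by
  rw [← sq_le_sq₀ (l2norm_nonneg u) (l2norm_nonneg v), l2norm_sq, l2norm_sq]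

lemma dotProduct_le_l2norm_mul_l2norm {n : ℕ} (u v : Fin n → ℝ) :
    u ⬝ᵥ v ≤ l2norm u * l2norm v := by
  refine le_of_abs_le (abs_le_of_sq_le_sq ?_ (mul_nonneg (l2norm_nonneg u) (l2norm_nonneg v)))
  rw [mul_pow, l2norm_sq, l2norm_sq]
  simpa only [dotProduct, sq] using Finset.sum_mul_sq_le_sq_mul_sq Finset.univ u v

lemma suppF_subset_iff {n : ℕ} {v : Fin n → ℝ} {S : Finset (Fin n)} :
    suppF v ⊆ S ↔ ∀ i ∉ S, v i = 0 := by
  simp only [Finset.subset_iff, suppF, Finset.mem_filter, Finset.mem_univ, true_and]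
  exact ⟨fun h i hi => by_contra fun hv => hi (h hv), fun h i hv => by_contra fun hi => hv (h i hi)⟩

lemma restr_eq_zero_iff {n : ℕ} {v : Fin n → ℝ} {S : Finset (Fin n)} :
    restr v S = 0 ↔ ∀ i ∈ S, v i = 0 := by
  simp only [funext_iff, restr, Pi.zero_apply, ite_eq_right_iff]

lemma restr_sdiff_eq_restr_union {n : ℕ} {v : Fin n → ℝ} {S T : Finset (Fin n)}
    (hT : ∀ i ∈ T, v i = 0) : restr v (S \ T) = restr v (S ∪ T) := by
  funext i
  by_cases hi : i ∈ T <;> simp [restr, hi, hT]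

lemma dotProduct_restr_of_suppF_subset {n : ℕ} {u : Fin n → ℝ} {S : Finset (Fin n)}
    (hu : suppF u ⊆ S) (v : Fin n → ℝ) : u ⬝ᵥ restr v S = u ⬝ᵥ v := by
  refine Finset.sum_congr rfl fun i _ => ?_
  by_cases hi : i ∈ S
  · simp [restr, hi]
  · simp [suppF_subset_iff.1 hu i hi]

lemma dotProduct_eq_zero_of_forall_le {m : ℕ} {r d : Fin m → ℝ}
    (h : ∀ t : ℝ, r ⬝ᵥ r ≤ (r - t • d) ⬝ᵥ (r - t • d)) : r ⬝ᵥ d = 0 := by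
  -- `t ↦ ‖d‖² t² - 2 ⟪r, d⟫ t` is nonnegative, so its discriminant `4 ⟪r, d⟫²` is not positive.
  have hquad : ∀ t : ℝ, 0 ≤ (d ⬝ᵥ d) * (t * t) + (-2 * (r ⬝ᵥ d)) * t + 0 := fun t => by
    have := h t
    simp only [sub_dotProduct, dotProduct_sub, smul_dotProduct, dotProduct_smul,
      dotProduct_comm d r, smul_eq_mul] at this
    linarith
  have := discrim_le_zero hquad
  rw [discrim] at this
  nlinarith [sq_nonneg (r ⬝ᵥ d)]

namespace IsLSE

variable {M N : ℕ} {Φ : Matrix (Fin M) (Fin N) ℝ} {y : Fin M → ℝ} {Λ : Finset (Fin N)}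
  {x' : Fin N → ℝ}

lemma residual_dotProduct_mulVec_eq_zero (hx' : IsLSE Φ y Λ x') {z : Fin N → ℝ}
    (hz : suppF z ⊆ Λ) : (y - Φ *ᵥ x') ⬝ᵥ (Φ *ᵥ z) = 0 := by
  refine dotProduct_eq_zero_of_forall_le fun t => ?_
  have hsupp : suppF (x' + t • z) ⊆ Λ := suppF_subset_iff.2 fun i hi => by
    simp [suppF_subset_iff.1 hx'.1 i hi, suppF_subset_iff.1 hz i hi]
  have := l2norm_le_l2norm_iff.1 (hx'.2 _ hsupp)
  rwa [mulVec_add, mulVec_smul, ← sub_sub] at this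

lemma transpose_mulVec_residual_apply_eq_zero (hx' : IsLSE Φ y Λ x') {i : Fin N}
    (hi : i ∈ Λ) : (Φᵀ *ᵥ (y - Φ *ᵥ x')) i = 0 := by
  have hsingle : suppF (Pi.single i 1 : Fin N → ℝ) ⊆ Λ := suppF_subset_iff.2 fun j hj => by
    simp [show j ≠ i by rintro rfl; exact hj hi]
  rw [← dotProduct_single_one (Φᵀ *ᵥ _) i, dotProduct_comm, dotProduct_mulVec,
    vecMul_transpose, dotProduct_comm]
  exact hx'.residual_dotProduct_mulVec_eq_zero hsingle

end IsLSE

lemma HasRIC.mul_l2norm_le_l2norm_restr_gram_mulVec {M N : ℕ}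
    {Φ : Matrix (Fin M) (Fin N) ℝ} {s : ℕ} {δ : ℝ} (hRIC : HasRIC Φ s δ)
    {h : Fin N → ℝ} {T : Finset (Fin N)} (hh : suppF h ⊆ T) (hT : T.card ≤ s) :
    (1 - δ) * l2norm h ≤ l2norm (restr ((Φᵀ * Φ) *ᵥ h) T) := by
  have hsq : (1 - δ) * l2norm h ^ 2 ≤ l2norm h * l2norm (restr ((Φᵀ * Φ) *ᵥ h) T) :=
    calc (1 - δ) * l2norm h ^ 2 ≤ l2norm (Φ *ᵥ h) ^ 2 :=
        (hRIC.2 h ((Finset.card_le_card hh).trans hT)).1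
      _ = h ⬝ᵥ restr ((Φᵀ * Φ) *ᵥ h) T := by
        rw [l2norm_sq, dotProduct_restr_of_suppF_subset hh, ← mulVec_mulVec,
          dotProduct_mulVec h, vecMul_transpose]
      _ ≤ l2norm h * l2norm (restr ((Φᵀ * Φ) *ᵥ h) T) := dotProduct_le_l2norm_mul_l2norm _ _
  rcases (l2norm_nonneg h).eq_or_lt with h0 | hpos
  · rw [← h0, mul_zero]
    exact l2norm_nonneg _
  · exact le_of_mul_le_mul_left (by linarith) hpos

/-- orthogonality of the least-squares residual on its own support
and a lower bound off the support. -/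
theorem lse_residual_orthogonality {M N : ℕ} (Φ : Matrix (Fin M) (Fin N) ℝ)
    (s : ℕ) (δ : ℝ) (hRIC : HasRIC Φ s δ)
    (x : Fin N → ℝ) (Λ : Finset (Fin N)) (hx : suppF x ⊆ Λ)
    (y : Fin M → ℝ) (hy : y = Φ.mulVec x)
    (Λ' : Finset (Fin N)) (hcard : (Λ ∪ Λ').card ≤ s)
    (x' : Fin N → ℝ) (hx' : IsLSE Φ y Λ' x') :
    restr (Φ.transpose.mulVec (y - Φ.mulVec x')) Λ' = 0 ∧
      l2norm (restr (Φ.transpose.mulVec (y - Φ.mulVec x')) (Λ \ Λ')) =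
        l2norm (restr ((Φ.transpose * Φ).mulVec (x - x')) (Λ ∪ Λ')) ∧
      (1 - δ) * l2norm (x - x') ≤
        l2norm (restr (Φ.transpose.mulVec (y - Φ.mulVec x')) (Λ \ Λ')) := by
  have hzero : ∀ i ∈ Λ', (Φᵀ *ᵥ (y - Φ *ᵥ x')) i = 0 := fun i hi =>
    hx'.transpose_mulVec_residual_apply_eq_zero hi
  have hgram : (Φᵀ * Φ) *ᵥ (x - x') = Φᵀ *ᵥ (y - Φ *ᵥ x') := by
    rw [hy, ← mulVec_mulVec, mulVec_sub]
  have hsupp : suppF (x - x') ⊆ Λ ∪ Λ' := suppF_subset_iff.2 fun i hi => by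
    rw [Finset.mem_union, not_or] at hi
    simp [suppF_subset_iff.1 hx i hi.1, suppF_subset_iff.1 hx'.1 i hi.2]
  rw [restr_sdiff_eq_restr_union hzero, ← hgram]
  exact ⟨restr_eq_zero_iff.2 (hgram ▸ hzero), rfl,
    hRIC.mul_l2norm_le_l2norm_restr_gram_mulVec hsupp hcard⟩
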